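/- Let m ≥ 1 be an integer, n ∈ ℤ, and let a ∈ ℓ^{2,1}(ℤ,ℂ). Define c : ℤ → ℂ by c(A) = ∑ ∏_{j even, 1≤j≤2m−1} a_{k_j} · ∏_{j odd, 1≤j≤2m−1} conj(a_{k_j}), where the sum ranges over all strictly decreasing tuples k_1 > k_2 > ⋯ > k_{2m−1} of integers with k_1 < n and 1 + ∑_{j=1}^{2m−1}(−1)^{j−1}k_j = A (this series converges absolutely since a ∈ ℓ¹). Then ( ∑_{A∈ℤ} |c(A)|² )^{1/2} ≤ (1 + π²/3)^{m−1} · ‖a‖_{2,1}^{2m−1} / (2m−2)!. -/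

import Mathlib

open scoped BigOperators ENNReal NNReal

namespace VolterraAux

/-- Norm of a `tsum` is at most the `ℝ≥0∞`-valued sum of norms. -/
lemma enorm_tsum_le {ι : Type*} (x : ι → ℂ) :
    (‖∑' i, x i‖₊ : ℝ≥0∞) ≤ ∑' i, (‖x i‖₊ : ℝ≥0∞) := by
  by_cases h : Summable fun i => ‖x i‖₊
  · have h' : Summable fun i => ‖x i‖ := by
      simpa [← NNReal.summable_coe] using h
    rw [← ENNReal.coe_tsum h, ENNReal.coe_le_coe, ← NNReal.coe_le_coe, NNReal.coe_tsum]
    simpa using norm_tsum_le_tsum_norm h'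
  · have htop : (∑' i, (‖x i‖₊ : ℝ≥0∞)) = ⊤ := by
      by_contra h'
      exact h (ENNReal.tsum_coe_ne_top_iff_summable.mp h')
    simp [htop]

/-- Sum over all tuples of a product equals the power of the sum. -/
lemma tsum_pi_prod (N : ℕ) (f : ℤ → ℝ≥0∞) :
    ∑' k : Fin N → ℤ, ∏ j, f (k j) = (∑' i, f i) ^ N := by
  induction N with
  | zero =>
    simp only [Finset.univ_eq_empty, Finset.prod_empty, pow_zero]
    exact tsum_eq_single (fun j => j.elim0) (fun b hb => absurd (Subsingleton.elim b _) hb)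
  | succ N ih =>
    rw [← Equiv.tsum_eq (Fin.consEquiv (fun _ : Fin (N + 1) => ℤ)) (fun k => ∏ j, f (k j)),
      ENNReal.tsum_prod']
    have hterm : ∀ (x : ℤ) (t : Fin N → ℤ),
        (∏ j, f ((Fin.consEquiv (fun _ : Fin (N + 1) => ℤ)) (x, t) j))
          = f x * ∏ j, f (t j) := by
      intro x t
      have hc : ∀ j : Fin (N + 1),
          ((Fin.consEquiv (fun _ : Fin (N + 1) => ℤ)) (x, t)) j
            = (Fin.cons x t : Fin (N + 1) → ℤ) j := fun j => rfl
      simp only [hc]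
      rw [Fin.prod_univ_succ]
      simp
    simp only [hterm, ENNReal.tsum_mul_left]
    rw [ih, ENNReal.tsum_mul_right, pow_succ, mul_comm]

/-- Sum over strictly decreasing tuples times `N!` is at most the power of the sum. -/
lemma tsum_strictAnti_le (N : ℕ) (f : ℤ → ℝ≥0∞) :
    (N.factorial : ℝ≥0∞) * ∑' k : {k : Fin N → ℤ // StrictAnti k}, ∏ j, f (k.1 j)
      ≤ (∑' i, f i) ^ N := by
  classical
  have hinj : Function.Injective
      (fun p : Equiv.Perm (Fin N) × {k : Fin N → ℤ // StrictAnti k} =>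
        (p.2.1 ∘ p.1 : Fin N → ℤ)) := by
    rintro ⟨σ, k, hk⟩ ⟨τ, l, hl⟩ h
    simp only at h
    have hrange : Set.range (k ∘ σ) = Set.range (l ∘ τ) := by rw [h]
    rw [Set.range_comp, Set.range_comp, Equiv.range_eq_univ, Equiv.range_eq_univ,
      Set.image_univ, Set.image_univ] at hrange
    have hkl : k = l := (hk.range_inj hl).mp hrange
    subst hkl
    have hστ : σ = τ := Equiv.ext fun j => hk.injective (congrFun h j)
    subst hστ
    rfl
  have h1 : ∑' p : Equiv.Perm (Fin N) × {k : Fin N → ℤ // StrictAnti k},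
      ∏ j, f ((p.2.1 ∘ p.1) j) ≤ ∑' t : Fin N → ℤ, ∏ j, f (t j) :=
    ENNReal.tsum_comp_le_tsum_of_injective hinj (fun t => ∏ j, f (t j))
  rw [tsum_pi_prod] at h1
  refine le_trans (le_of_eq ?_) h1
  have h2 : ∀ p : Equiv.Perm (Fin N) × {k : Fin N → ℤ // StrictAnti k},
      (∏ j, f ((p.2.1 ∘ p.1) j)) = ∏ j, f (p.2.1 j) := by
    intro p
    exact Equiv.prod_comp p.1 (fun j => f (p.2.1 j))
  rw [tsum_congr h2, ENNReal.tsum_prod',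
    tsum_fintype (fun _ : Equiv.Perm (Fin N) =>
      ∑' k : {k : Fin N → ℤ // StrictAnti k}, ∏ j, f (k.1 j)),
    Finset.sum_const, Finset.card_univ, Fintype.card_perm, Fintype.card_fin, nsmul_eq_mul]

/-- Summability of the weight `1/(1+i²)` over `ℤ` together with the bound `1 + π²/3`. -/
lemma weight_bound :
    Summable (fun i : ℤ => 1 / (1 + (i : ℝ) ^ 2)) ∧
      ∑' i : ℤ, 1 / (1 + (i : ℝ) ^ 2) ≤ 1 + Real.pi ^ 2 / 3 := by
  have hshift : Summable (fun n : ℕ => 1 / (((n : ℝ) + 1)) ^ 2) := by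
    have h0 : Summable (fun n : ℕ => 1 / ((n : ℝ)) ^ 2) :=
      Real.summable_one_div_nat_pow.mpr one_lt_two
    have := (summable_nat_add_iff 1).mpr h0
    exact this.congr fun n => by push_cast; ring
  have hgs : Summable (fun n : ℕ => 1 / (1 + ((n : ℝ) + 1) ^ 2)) := by
    refine Summable.of_nonneg_of_le (fun n => by positivity) (fun n => ?_) hshift
    have h1 : (0:ℝ) < ((n : ℝ) + 1) ^ 2 := by positivity
    rw [div_le_div_iff₀ (by positivity) h1]
    nlinarith
  have hgnat : Summable (fun n : ℕ => 1 / (1 + (n : ℝ) ^ 2)) := by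
    rw [← summable_nat_add_iff 1]
    exact hgs.congr fun n => by push_cast; ring
  have hbasel : ∑' n : ℕ, 1 / (((n : ℝ) + 1)) ^ 2 = Real.pi ^ 2 / 6 := by
    have h0 := hasSum_zeta_two.tsum_eq
    rw [Summable.tsum_eq_zero_add hasSum_zeta_two.summable] at h0
    norm_num at h0
    rw [← h0]
    exact tsum_congr fun n => by push_cast; ring
  have hsum_shift : ∑' n : ℕ, 1 / (1 + ((n : ℝ) + 1) ^ 2) ≤ Real.pi ^ 2 / 6 := by
    rw [← hbasel]
    refine Summable.tsum_le_tsum (fun n => ?_) hgs hshift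
    have h1 : (0:ℝ) < ((n : ℝ) + 1) ^ 2 := by positivity
    rw [div_le_div_iff₀ (by positivity) h1]
    nlinarith
  have hsum_nat : ∑' n : ℕ, 1 / (1 + (n : ℝ) ^ 2) ≤ 1 + Real.pi ^ 2 / 6 := by
    rw [Summable.tsum_eq_zero_add hgnat]
    have h2 : ∑' n : ℕ, 1 / (1 + ((n : ℕ) + 1 : ℝ) ^ 2) ≤ Real.pi ^ 2 / 6 := by
      rw [show (fun n : ℕ => 1 / (1 + ((n : ℕ) + 1 : ℝ) ^ 2))
          = fun n : ℕ => 1 / (1 + ((n : ℝ) + 1) ^ 2) from funext fun n => by push_cast; ring]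
      exact hsum_shift
    have h3 : ∑' n : ℕ, 1 / (1 + ((n + 1 : ℕ) : ℝ) ^ 2) ≤ Real.pi ^ 2 / 6 := by
      refine le_trans (le_of_eq (tsum_congr fun n => ?_)) h2
      push_cast; ring_nf
    have h4 : (1:ℝ) / (1 + ((0:ℕ):ℝ) ^ 2) = 1 := by norm_num
    rw [h4]
    linarith [h3]
  -- decompose the integer sum
  have hw_eq : (fun i : ℤ => 1 / (1 + (i : ℝ) ^ 2))
      = fun i : ℤ => Int.rec (fun n : ℕ => 1 / (1 + (n : ℝ) ^ 2))
          (fun n : ℕ => 1 / (1 + ((n : ℝ) + 1) ^ 2)) i := by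
    funext i
    cases i with
    | ofNat n => simp
    | negSucc n =>
      show 1 / (1 + ((Int.negSucc n : ℤ) : ℝ) ^ 2) = 1 / (1 + ((n : ℝ) + 1) ^ 2)
      rw [Int.cast_negSucc]
      push_cast
      ring_nf
  have hHS := hgnat.hasSum.int_rec hgs.hasSum
  rw [← hw_eq] at hHS
  refine ⟨hHS.summable, ?_⟩
  rw [hHS.tsum_eq]
  linarith [hsum_nat, hsum_shift]

end VolterraAux

open VolterraAux

set_option maxHeartbeats 1000000 in
/-- ℓ² bound on the Fourier coefficients of the (2m−1)-st iterate of the Volterra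
summation operator: if `c(A)` is the sum over strictly decreasing tuples
`k_1 > ⋯ > k_{2m-1}` with `k_1 < n` and alternating sum `1 + ∑ (-1)^{j-1} k_j = A`
of `∏_{j even} a_{k_j} · ∏_{j odd} conj(a_{k_j})`, then
`‖c‖_{ℓ²} ≤ (1+π²/3)^{m-1} ‖a‖_{2,1}^{2m-1} / (2m-2)!`. -/
theorem volterra_fourier_coefficient_l2_bound
    (m : ℕ) (hm : 1 ≤ m) (n : ℤ) (a : ℤ → ℂ)
    (ha : Summable fun i : ℤ => (1 + (i : ℝ) ^ 2) * ‖a i‖ ^ 2)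
    (c : ℤ → ℂ)
    (hc : ∀ A : ℤ, c A =
      ∑' k : {k : Fin (2 * m - 1) → ℤ // StrictAnti k ∧ k ⟨0, by omega⟩ < n ∧
          1 + ∑ j : Fin (2 * m - 1), (-1 : ℤ) ^ (j : ℕ) * k j = A},
        ∏ j : Fin (2 * m - 1),
          (if Even (j : ℕ) then (starRingEnd ℂ) (a (k.1 j)) else a (k.1 j))) :
    Real.sqrt (∑' A : ℤ, ‖c A‖ ^ 2) ≤
      (1 + Real.pi ^ 2 / 3) ^ (m - 1) *
        (Real.sqrt (∑' i : ℤ, (1 + (i : ℝ) ^ 2) * ‖a i‖ ^ 2)) ^ (2 * m - 1) /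
          (Nat.factorial (2 * m - 2)) := by
  classical
  set C : ℝ := 1 + Real.pi ^ 2 / 3 with hC_def
  set X : ℝ := Real.sqrt (∑' i : ℤ, (1 + (i : ℝ) ^ 2) * ‖a i‖ ^ 2) with hX_def
  have hC0 : (0:ℝ) < C := by rw [hC_def]; positivity
  have hX0 : (0:ℝ) ≤ X := Real.sqrt_nonneg _
  have hC9 : C ≤ 9 := by
    have h4 := Real.pi_le_four
    have h0 := Real.pi_nonneg
    rw [hC_def]; nlinarith
  have hsqrtC : Real.sqrt C ≤ 3 := by
    rw [show (3:ℝ) = Real.sqrt 9 by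
      rw [show (9:ℝ) = 3 ^ 2 by norm_num, Real.sqrt_sq (by norm_num)]]
    exact Real.sqrt_le_sqrt hC9
  have hsC0 : (0:ℝ) ≤ Real.sqrt C := Real.sqrt_nonneg _
  -- the ℝ≥0∞ valued absolute values
  set f : ℤ → ℝ≥0∞ := fun i => (‖a i‖₊ : ℝ≥0∞) with hf_def
  -- termwise bound on ‖c A‖
  have hca : ∀ A : ℤ, (‖c A‖₊ : ℝ≥0∞) ≤
      ∑' k : {k : Fin (2 * m - 1) → ℤ // StrictAnti k ∧ k ⟨0, by omega⟩ < n ∧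
          1 + ∑ j : Fin (2 * m - 1), (-1 : ℤ) ^ (j : ℕ) * k j = A},
        ∏ j, f (k.1 j) := by
    intro A
    rw [hc A]
    refine le_trans (enorm_tsum_le _) (le_of_eq (tsum_congr fun t => ?_))
    rw [nnnorm_prod, ENNReal.coe_finset_prod]
    refine Finset.prod_congr rfl fun j _ => ?_
    split_ifs <;> simp [hf_def]
  -- Cauchy-Schwarz: ℓ¹ bound on a
  obtain ⟨hw_summ, hw_tsum⟩ := weight_bound
  have hanorm : Summable (fun i : ℤ => ‖a i‖) := by
    refine Summable.of_nonneg_of_le (fun i => norm_nonneg _) (fun i => ?_)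
      (((hw_summ.add ha).div_const 2))
    have hs1 : (1:ℝ) ≤ 1 + (i : ℝ) ^ 2 := by nlinarith [sq_nonneg ((i:ℝ))]
    have hs0 : (0:ℝ) < 1 + (i : ℝ) ^ 2 := by linarith
    have hident : 1 / (1 + (i : ℝ) ^ 2) + (1 + (i : ℝ) ^ 2) * ‖a i‖ ^ 2 - 2 * ‖a i‖
        = ((1 + (i : ℝ) ^ 2) * ‖a i‖ - 1) ^ 2 / (1 + (i : ℝ) ^ 2) := by
      field_simp
      ring
    have hnn : (0:ℝ) ≤ ((1 + (i : ℝ) ^ 2) * ‖a i‖ - 1) ^ 2 / (1 + (i : ℝ) ^ 2) :=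
      div_nonneg (sq_nonneg _) hs0.le
    rw [le_div_iff₀ (by norm_num : (0:ℝ) < 2)]
    linarith [hident, hnn]
  have hCS : ∑' i : ℤ, ‖a i‖ ≤ Real.sqrt C * X := by
    refine Summable.tsum_le_of_sum_le hanorm (fun s => ?_)
    have h1 : ∀ i : ℤ, ‖a i‖ =
        Real.sqrt (1 / (1 + (i : ℝ) ^ 2)) * Real.sqrt ((1 + (i : ℝ) ^ 2) * ‖a i‖ ^ 2) := by
      intro i
      have hs0 : (0:ℝ) < 1 + (i : ℝ) ^ 2 := by positivity
      rw [← Real.sqrt_mul (by positivity),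
        show 1 / (1 + (i : ℝ) ^ 2) * ((1 + (i : ℝ) ^ 2) * ‖a i‖ ^ 2) = ‖a i‖ ^ 2 by
          field_simp]
      exact (Real.sqrt_sq (norm_nonneg _)).symm
    calc ∑ i ∈ s, ‖a i‖
        = ∑ i ∈ s, Real.sqrt (1 / (1 + (i : ℝ) ^ 2))
            * Real.sqrt ((1 + (i : ℝ) ^ 2) * ‖a i‖ ^ 2) :=
          Finset.sum_congr rfl (fun i _ => h1 i)
      _ ≤ Real.sqrt (∑ i ∈ s, 1 / (1 + (i : ℝ) ^ 2))
            * Real.sqrt (∑ i ∈ s, (1 + (i : ℝ) ^ 2) * ‖a i‖ ^ 2) :=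
          Real.sum_sqrt_mul_sqrt_le s (fun i => by positivity) (fun i => by positivity)
      _ ≤ Real.sqrt C * X := by
          rw [hX_def]
          refine mul_le_mul ?_ ?_ (Real.sqrt_nonneg _) (Real.sqrt_nonneg _)
          · exact Real.sqrt_le_sqrt
              (le_trans (Summable.sum_le_tsum s (fun i _ => by positivity) hw_summ) hw_tsum)
          · exact Real.sqrt_le_sqrt (Summable.sum_le_tsum s (fun i _ => by positivity) ha)
  have hS_eq : ∑' i : ℤ, f i = ENNReal.ofReal (∑' i : ℤ, ‖a i‖) := by
    rw [ENNReal.ofReal_tsum_of_nonneg (fun i => norm_nonneg _) hanorm]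
    exact tsum_congr fun i => ((ofReal_norm _).trans (enorm_eq_nnnorm _)).symm
  have hS_le : ∑' i : ℤ, f i ≤ ENNReal.ofReal (Real.sqrt C * X) := by
    rw [hS_eq]; exact ENNReal.ofReal_le_ofReal hCS
  -- reduce the goal to an ℝ≥0∞ estimate
  suffices hkey : (∑' A : ℤ, ((‖c A‖₊ : ℝ≥0∞)) ^ 2)
      ≤ ENNReal.ofReal ((C ^ (m - 1) * X ^ (2 * m - 1) / ((2 * m - 2).factorial : ℝ)) ^ 2) by
    have hR0 : (0:ℝ) ≤ C ^ (m - 1) * X ^ (2 * m - 1) / ((2 * m - 2).factorial : ℝ) :=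
      div_nonneg (mul_nonneg (pow_nonneg hC0.le _) (pow_nonneg hX0 _)) (Nat.cast_nonneg _)
    have hne : (∑' A : ℤ, ((‖c A‖₊ ^ 2 : ℝ≥0) : ℝ≥0∞)) ≠ ⊤ := by
      simp only [ENNReal.coe_pow]
      exact (lt_of_le_of_lt hkey ENNReal.ofReal_lt_top).ne
    have hsumNN : Summable (fun A : ℤ => ‖c A‖₊ ^ 2) :=
      ENNReal.tsum_coe_ne_top_iff_summable.mp hne
    have hsumR : Summable (fun A : ℤ => ‖c A‖ ^ 2) := by
      have := NNReal.summable_coe.mpr hsumNN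
      refine this.congr fun A => ?_
      push_cast
      rfl
    have hle2 : ∑' A : ℤ, ‖c A‖ ^ 2
        ≤ (C ^ (m - 1) * X ^ (2 * m - 1) / ((2 * m - 2).factorial : ℝ)) ^ 2 := by
      rw [← ENNReal.ofReal_le_ofReal_iff (by positivity),
        ENNReal.ofReal_tsum_of_nonneg (fun A => sq_nonneg _) hsumR]
      refine le_trans (le_of_eq (tsum_congr fun A => ?_)) hkey
      rw [ENNReal.ofReal_pow (norm_nonneg _), (ofReal_norm _).trans (enorm_eq_nnnorm _)]
    calc Real.sqrt (∑' A : ℤ, ‖c A‖ ^ 2)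
        ≤ Real.sqrt ((C ^ (m - 1) * X ^ (2 * m - 1) / ((2 * m - 2).factorial : ℝ)) ^ 2) :=
          Real.sqrt_le_sqrt hle2
      _ = C ^ (m - 1) * X ^ (2 * m - 1) / ((2 * m - 2).factorial : ℝ) := Real.sqrt_sq hR0
  -- prove the key estimate
  rcases Nat.lt_or_ge m 2 with hm2 | hm2
  · -- m = 1
    have hm1 : m = 1 := by omega
    subst hm1
    haveI hsub : Subsingleton (Fin (2 * 1 - 1)) := inferInstanceAs (Subsingleton (Fin 1))
    have hone : ∀ A : ℤ,
        (∑' t : {k : Fin (2 * 1 - 1) → ℤ // StrictAnti k ∧ k ⟨0, by omega⟩ < n ∧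
            1 + ∑ j : Fin (2 * 1 - 1), (-1 : ℤ) ^ (j : ℕ) * k j = A},
          ∏ j, f (t.1 j)) ≤ f (A - 1) := by
      intro A
      have hval0 : ∀ t : {k : Fin (2 * 1 - 1) → ℤ // StrictAnti k ∧ k ⟨0, by omega⟩ < n ∧
          1 + ∑ j : Fin (2 * 1 - 1), (-1 : ℤ) ^ (j : ℕ) * k j = A},
          t.1 ⟨0, by omega⟩ = A - 1 := by
        rintro ⟨k, hk1, hk2, hk3⟩
        have hsum : ∑ j : Fin (2 * 1 - 1), (-1 : ℤ) ^ (j : ℕ) * k j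
            = k ⟨0, by omega⟩ := by
          rw [Finset.sum_eq_single (⟨0, by omega⟩ : Fin (2 * 1 - 1))]
          · norm_num
          · intro b _ hb; exact absurd (Subsingleton.elim b _) hb
          · intro h; exact absurd (Finset.mem_univ _) h
        linarith [hk3, hsum]
      have hval : ∀ t : {k : Fin (2 * 1 - 1) → ℤ // StrictAnti k ∧ k ⟨0, by omega⟩ < n ∧
          1 + ∑ j : Fin (2 * 1 - 1), (-1 : ℤ) ^ (j : ℕ) * k j = A},
          (∏ j, f (t.1 j)) = f (A - 1) := by
        intro t
        rw [Finset.prod_eq_single (⟨0, by omega⟩ : Fin (2 * 1 - 1))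
          (fun b _ hb => absurd (Subsingleton.elim b _) hb)
          (fun h => absurd (Finset.mem_univ _) h)]
        rw [hval0 t]
      rcases isEmpty_or_nonempty {k : Fin (2 * 1 - 1) → ℤ // StrictAnti k ∧
          k ⟨0, by omega⟩ < n ∧
          1 + ∑ j : Fin (2 * 1 - 1), (-1 : ℤ) ^ (j : ℕ) * k j = A} with hE | hNE
      · rw [tsum_empty]; exact zero_le
      · obtain ⟨t0⟩ := hNE
        haveI : Subsingleton {k : Fin (2 * 1 - 1) → ℤ // StrictAnti k ∧
            k ⟨0, by omega⟩ < n ∧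
            1 + ∑ j : Fin (2 * 1 - 1), (-1 : ℤ) ^ (j : ℕ) * k j = A} := by
          constructor
          intro t s
          apply Subtype.ext
          funext j
          rw [Subsingleton.elim j (⟨0, by omega⟩ : Fin (2 * 1 - 1)), hval0 t, hval0 s]
        rw [tsum_eq_single t0 (fun b hb => absurd (Subsingleton.elim b t0) hb)]
        exact le_of_eq (hval t0)
    calc (∑' A : ℤ, ((‖c A‖₊ : ℝ≥0∞)) ^ 2)
        ≤ ∑' A : ℤ, (f (A - 1)) ^ 2 :=
          ENNReal.tsum_le_tsum fun A => pow_le_pow_left' ((hca A).trans (hone A)) 2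
      _ ≤ ∑' A : ℤ, ENNReal.ofReal ((1 + (((A - 1 : ℤ)) : ℝ) ^ 2) * ‖a (A - 1)‖ ^ 2) := by
          refine ENNReal.tsum_le_tsum fun A => ?_
          rw [hf_def]
          simp only
          rw [← (ofReal_norm _).trans (enorm_eq_nnnorm _), ← ENNReal.ofReal_pow (norm_nonneg _)]
          refine ENNReal.ofReal_le_ofReal ?_
          nlinarith [sq_nonneg (((A - 1 : ℤ)) : ℝ), sq_nonneg ‖a (A - 1)‖]
      _ = ∑' i : ℤ, ENNReal.ofReal ((1 + (i : ℝ) ^ 2) * ‖a i‖ ^ 2) :=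
          (Equiv.subRight (1:ℤ)).tsum_eq
            (fun i => ENNReal.ofReal ((1 + (i : ℝ) ^ 2) * ‖a i‖ ^ 2))
      _ = ENNReal.ofReal (∑' i : ℤ, (1 + (i : ℝ) ^ 2) * ‖a i‖ ^ 2) :=
          (ENNReal.ofReal_tsum_of_nonneg (fun i => by positivity) ha).symm
      _ = ENNReal.ofReal ((C ^ (1 - 1) * X ^ (2 * 1 - 1) / ((2 * 1 - 2).factorial : ℝ)) ^ 2) := by
          congr 1
          have hTn : (0:ℝ) ≤ ∑' i : ℤ, (1 + (i : ℝ) ^ 2) * ‖a i‖ ^ 2 :=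
            tsum_nonneg (fun i => by positivity)
          rw [hX_def]
          norm_num [Nat.factorial]
          exact (Real.sq_sqrt hTn).symm
    exact le_rfl
  · -- 2 ≤ m
    set TT : ℝ≥0∞ := ∑' A : ℤ, ∑' t : {k : Fin (2 * m - 1) → ℤ // StrictAnti k ∧
        k ⟨0, by omega⟩ < n ∧
        1 + ∑ j : Fin (2 * m - 1), (-1 : ℤ) ^ (j : ℕ) * k j = A}, ∏ j, f (t.1 j) with hTT_def
    have step1 : (∑' A : ℤ, ((‖c A‖₊ : ℝ≥0∞)) ^ 2) ≤ TT ^ 2 := by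
      have h1 : ∀ A : ℤ, ((‖c A‖₊ : ℝ≥0∞)) ^ 2 ≤
          (∑' t : {k : Fin (2 * m - 1) → ℤ // StrictAnti k ∧ k ⟨0, by omega⟩ < n ∧
            1 + ∑ j : Fin (2 * m - 1), (-1 : ℤ) ^ (j : ℕ) * k j = A}, ∏ j, f (t.1 j)) * TT := by
        intro A
        rw [sq]
        refine mul_le_mul' (hca A) ((hca A).trans ?_)
        rw [hTT_def]
        exact ENNReal.le_tsum A
      refine le_trans (ENNReal.tsum_le_tsum h1) ?_
      rw [ENNReal.tsum_mul_right, ← hTT_def, sq]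
    -- regroup as a sigma-type sum and compare with all strictly decreasing tuples
    have hι : Function.Injective
        (fun p : (Σ A : ℤ, {k : Fin (2 * m - 1) → ℤ // StrictAnti k ∧ k ⟨0, by omega⟩ < n ∧
            1 + ∑ j : Fin (2 * m - 1), (-1 : ℤ) ^ (j : ℕ) * k j = A}) =>
          (⟨p.2.1, p.2.2.1⟩ : {k : Fin (2 * m - 1) → ℤ // StrictAnti k})) := by
      rintro ⟨A, k, hk1, hk2, hk3⟩ ⟨B, l, hl1, hl2, hl3⟩ h
      simp only [Subtype.mk.injEq] at h
      subst h
      have hAB : A = B := by rw [← hk3, ← hl3]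
      subst hAB
      rfl
    have hσ : TT = ∑' p : (Σ A : ℤ, {k : Fin (2 * m - 1) → ℤ // StrictAnti k ∧
        k ⟨0, by omega⟩ < n ∧
        1 + ∑ j : Fin (2 * m - 1), (-1 : ℤ) ^ (j : ℕ) * k j = A}), ∏ j, f (p.2.1 j) :=
      hTT_def.trans (ENNReal.tsum_sigma' (fun p : (Σ A : ℤ,
        {k : Fin (2 * m - 1) → ℤ // StrictAnti k ∧ k ⟨0, by omega⟩ < n ∧
          1 + ∑ j : Fin (2 * m - 1), (-1 : ℤ) ^ (j : ℕ) * k j = A}) =>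
        ∏ j, f (p.2.1 j))).symm
    have hstep2 : TT ≤ ∑' k : {k : Fin (2 * m - 1) → ℤ // StrictAnti k}, ∏ j, f (k.1 j) := by
      rw [hσ]
      exact ENNReal.tsum_comp_le_tsum_of_injective hι (fun k => ∏ j, f (k.1 j))
    have hstep3 : TT ≤ (∑' i : ℤ, f i) ^ (2 * m - 1) / (((2 * m - 1).factorial : ℕ) : ℝ≥0∞) := by
      rw [ENNReal.le_div_iff_mul_le
        (Or.inl (by exact_mod_cast (Nat.factorial_ne_zero (2 * m - 1))))
        (Or.inl (ENNReal.natCast_ne_top _))]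
      calc TT * (((2 * m - 1).factorial : ℕ) : ℝ≥0∞)
          = (((2 * m - 1).factorial : ℕ) : ℝ≥0∞) * TT := mul_comm _ _
        _ ≤ (((2 * m - 1).factorial : ℕ) : ℝ≥0∞)
            * ∑' k : {k : Fin (2 * m - 1) → ℤ // StrictAnti k}, ∏ j, f (k.1 j) :=
            mul_le_mul_right hstep2 _
        _ ≤ (∑' i : ℤ, f i) ^ (2 * m - 1) := tsum_strictAnti_le (2 * m - 1) f
    have hstep4 : TT ≤ ENNReal.ofReal
        ((Real.sqrt C * X) ^ (2 * m - 1) / (((2 * m - 1).factorial : ℕ) : ℝ)) := by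
      refine hstep3.trans ?_
      rw [ENNReal.ofReal_div_of_pos (by exact_mod_cast Nat.factorial_pos (2 * m - 1)),
        ENNReal.ofReal_pow (mul_nonneg hsC0 hX0), ENNReal.ofReal_natCast]
      exact ENNReal.div_le_div_right (pow_le_pow_left' hS_le _) _
    -- real arithmetic: fold the constants
    have hRR : (Real.sqrt C * X) ^ (2 * m - 1) / (((2 * m - 1).factorial : ℕ) : ℝ)
        ≤ C ^ (m - 1) * X ^ (2 * m - 1) / ((2 * m - 2).factorial : ℝ) := by
      have hfact_eq : (((2 * m - 1).factorial : ℕ) : ℝ)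
          = ((2 * m - 1 : ℕ) : ℝ) * ((2 * m - 2).factorial : ℝ) := by
        have h : (2 * m - 1) = (2 * m - 2) + 1 := by omega
        rw [h, Nat.factorial_succ]
        push_cast
        ring
      have hsplit : (Real.sqrt C * X) ^ (2 * m - 1)
          = C ^ (m - 1) * Real.sqrt C * X ^ (2 * m - 1) := by
        rw [mul_pow]
        congr 1
        rw [show 2 * m - 1 = 2 * (m - 1) + 1 by omega, pow_succ, pow_mul,
          Real.sq_sqrt hC0.le]
      have h3m : Real.sqrt C ≤ ((2 * m - 1 : ℕ) : ℝ) := by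
        refine hsqrtC.trans ?_
        have h3 : (3 : ℕ) ≤ 2 * m - 1 := by omega
        exact_mod_cast h3
      have hf2pos : (0:ℝ) < ((2 * m - 2).factorial : ℝ) := by
        exact_mod_cast Nat.factorial_pos (2 * m - 2)
      have hf1pos : (0:ℝ) < (((2 * m - 1).factorial : ℕ) : ℝ) := by
        exact_mod_cast Nat.factorial_pos (2 * m - 1)
      rw [hsplit, hfact_eq, div_le_div_iff₀ (by rw [← hfact_eq]; exact hf1pos) hf2pos]
      have hmono : (0:ℝ) ≤ C ^ (m - 1) * X ^ (2 * m - 1) * ((2 * m - 2).factorial : ℝ) :=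
        mul_nonneg (mul_nonneg (pow_nonneg hC0.le _) (pow_nonneg hX0 _)) hf2pos.le
      calc C ^ (m - 1) * Real.sqrt C * X ^ (2 * m - 1) * ((2 * m - 2).factorial : ℝ)
          = (C ^ (m - 1) * X ^ (2 * m - 1) * ((2 * m - 2).factorial : ℝ)) * Real.sqrt C := by
            ring
        _ ≤ (C ^ (m - 1) * X ^ (2 * m - 1) * ((2 * m - 2).factorial : ℝ))
              * ((2 * m - 1 : ℕ) : ℝ) := mul_le_mul_of_nonneg_left h3m hmono
        _ = C ^ (m - 1) * X ^ (2 * m - 1)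
              * (((2 * m - 1 : ℕ) : ℝ) * ((2 * m - 2).factorial : ℝ)) := by ring
    refine step1.trans ?_
    calc TT ^ 2
        ≤ (ENNReal.ofReal
            ((Real.sqrt C * X) ^ (2 * m - 1) / (((2 * m - 1).factorial : ℕ) : ℝ))) ^ 2 :=
          pow_le_pow_left' hstep4 2
      _ = ENNReal.ofReal
            (((Real.sqrt C * X) ^ (2 * m - 1) / (((2 * m - 1).factorial : ℕ) : ℝ)) ^ 2) :=
          (ENNReal.ofReal_pow (div_nonneg (pow_nonneg (mul_nonneg hsC0 hX0) _)
            (Nat.cast_nonneg _)) 2).symm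
      _ ≤ ENNReal.ofReal
            ((C ^ (m - 1) * X ^ (2 * m - 1) / ((2 * m - 2).factorial : ℝ)) ^ 2) :=
          ENNReal.ofReal_le_ofReal (pow_le_pow_left₀ (div_nonneg (pow_nonneg
            (mul_nonneg hsC0 hX0) _) (Nat.cast_nonneg _)) hRR 2)
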